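/- arXiv:cs/0107011 — 4 statements merged into one kernel-verified Lean document; each statement's English description precedes it below -/
import Mathlib

section
/- There exists an absolute constant c > 0 such that for all integers r ≥ 2, n ≥ 2 and m ≥ 1 the following holds: if there exist n sequences of length m over the alphabet {0,1,…,r} that are pairwise r-different, then m ≥ c·(r/log₂ r)·log₂ n. -/
open Finset

/-- Two sequences of length `m` over the alphabet `{0, 1, …, r}` are
`r`-different if for every `z ∈ {1, …, r}` there is a coordinate `i` with
`{x i, y i} = {z, 0}`. -/
def RDifferent (r m : ℕ) (x y : Fin m → Fin (r + 1)) : Prop :=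
  ∀ z : Fin (r + 1), z ≠ 0 → ∃ i : Fin m, (x i = z ∧ y i = 0) ∨ (x i = 0 ∧ y i = z)

lemma survival {r n m : ℕ} (p : ℝ) (hp0 : 0 ≤ p) (hp1 : p ≤ 1)
    (f : Fin n → Fin m → Fin (r + 1))
    (hf : ∀ i j : Fin n, i ≠ j → RDifferent r m (f i) (f j))
    (z : Fin (r + 1)) (hz : z ≠ 0) :
    ∑ i : Fin n, ∏ t : Fin m,
      (if f i t = 0 then p else if f i t = z then 1 - p else 1) ≤ 1 := by
  classical
  have hz' : ¬ ((0 : Fin (r+1)) = z) := fun h => hz h.symm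
  set G : Fin n → Fin m → Bool → ℝ := fun i t b =>
    if (f i t = 0 ∧ b = false) ∨ (f i t = z ∧ b = true) then 0
    else (if b then p else 1 - p) with hG
  have h1 : ∀ i : Fin n,
      ∏ t : Fin m, (if f i t = 0 then p else if f i t = z then 1 - p else 1)
        = ∏ t : Fin m, ∑ b : Bool, G i t b := by
    intro i
    refine Finset.prod_congr rfl fun t _ => ?_
    rw [Fintype.sum_bool]
    by_cases h0 : f i t = 0
    · have hne : f i t ≠ z := by rw [h0]; exact fun h => hz h.symm
      simp [hG, h0, hne, hz']
    · by_cases h1 : f i t = z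
      · simp [hG, h0, h1, hz]
      · simp only [hG, h0, h1]
        norm_num
  have h2 : ∀ i : Fin n,
      ∏ t : Fin m, ∑ b : Bool, G i t b = ∑ s : Fin m → Bool, ∏ t, G i t (s t) := by
    intro i
    have := Finset.prod_univ_sum (fun _ : Fin m => (univ : Finset Bool)) (G i)
    rw [Fintype.piFinset_univ] at this
    exact this
  have hwnn : ∀ s : Fin m → Bool, (0:ℝ) ≤ ∏ t, (if s t then p else 1 - p) := by
    intro s
    exact Finset.prod_nonneg fun t _ => by split <;> linarith
  have h3 : ∀ s : Fin m → Bool,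
      ∑ i : Fin n, ∏ t, G i t (s t) ≤ ∏ t, (if s t then p else 1 - p) := by
    intro s
    set w : ℝ := ∏ t, (if s t then p else 1 - p) with hw
    set P : Fin n → Prop :=
      fun i => ∀ t : Fin m, ¬((f i t = 0 ∧ s t = false) ∨ (f i t = z ∧ s t = true)) with hP
    have hprod : ∀ i, ∏ t, G i t (s t) = if P i then w else 0 := by
      intro i
      by_cases h : P i
      · rw [if_pos h, hw]
        exact Finset.prod_congr rfl fun t _ => by rw [hG]; exact if_neg (h t)
      · rw [if_neg h]
        rw [hP] at h
        obtain ⟨t, ht⟩ := not_forall.mp h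
        rw [not_not] at ht
        refine Finset.prod_eq_zero (Finset.mem_univ t) ?_
        rw [hG]
        exact if_pos ht
    have hcard : (univ.filter P).card ≤ 1 := by
      rw [Finset.card_le_one]
      intro a ha b hb
      by_contra hne
      obtain ⟨t, ht⟩ := hf a b hne z hz
      have hPa : P a := (Finset.mem_filter.mp ha).2
      have hPb : P b := (Finset.mem_filter.mp hb).2
      rcases ht with ⟨ha1, hb1⟩ | ⟨ha1, hb1⟩
      · have h1 := hPa t
        have h2 := hPb t
        cases hst : s t
        · exact h2 (Or.inl ⟨hb1, hst⟩)
        · exact h1 (Or.inr ⟨ha1, hst⟩)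
      · have h1 := hPa t
        have h2 := hPb t
        cases hst : s t
        · exact h1 (Or.inl ⟨ha1, hst⟩)
        · exact h2 (Or.inr ⟨hb1, hst⟩)
    calc ∑ i : Fin n, ∏ t, G i t (s t) = ∑ i : Fin n, if P i then w else 0 :=
          Finset.sum_congr rfl fun i _ => hprod i
      _ = ∑ i ∈ univ.filter P, w := (Finset.sum_filter P (fun _ => w)).symm
      _ = (univ.filter P).card • w := Finset.sum_const w
      _ ≤ 1 • w := by
          apply smul_le_smul_of_nonneg_right _ (hwnn s)
          exact_mod_cast hcard
      _ = w := one_smul _ _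
  have h4 : ∑ s : Fin m → Bool, ∏ t, (if s t then p else 1 - p) = 1 := by
    have := Finset.prod_univ_sum (fun _ : Fin m => (univ : Finset Bool))
      (fun (_ : Fin m) (b : Bool) => if b then p else (1 - p))
    rw [Fintype.piFinset_univ] at this
    rw [← this]
    have : ∀ t : Fin m, ∑ b : Bool, (if b then p else 1 - p) = 1 := by
      intro t; rw [Fintype.sum_bool]; norm_num
    rw [Finset.prod_congr rfl fun t _ => this t]
    simp
  calc ∑ i : Fin n, ∏ t : Fin m, (if f i t = 0 then p else if f i t = z then 1 - p else 1)
      = ∑ i : Fin n, ∑ s : Fin m → Bool, ∏ t, G i t (s t) := by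
        refine Finset.sum_congr rfl fun i _ => ?_; rw [h1 i, h2 i]
    _ = ∑ s : Fin m → Bool, ∑ i : Fin n, ∏ t, G i t (s t) := Finset.sum_comm
    _ ≤ ∑ s : Fin m → Bool, ∏ t, (if s t then p else 1 - p) :=
        Finset.sum_le_sum fun s _ => h3 s
    _ = 1 := h4

-- step 1 : r ≤ m
lemma step_r_le_m {r n m : ℕ} (hn : 2 ≤ n)
    (f : Fin n → Fin m → Fin (r + 1))
    (hf : ∀ i j : Fin n, i ≠ j → RDifferent r m (f i) (f j)) : r ≤ m := by
  have h01 : (⟨0, by omega⟩ : Fin n) ≠ ⟨1, by omega⟩ := by simp [Fin.ext_iff]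
  have hd := hf _ _ h01
  have hwit : ∀ j : Fin r, ∃ t : Fin m,
      (f ⟨0, by omega⟩ t = ⟨j.val + 1, by omega⟩ ∧ f ⟨1, by omega⟩ t = 0) ∨
      (f ⟨0, by omega⟩ t = 0 ∧ f ⟨1, by omega⟩ t = ⟨j.val + 1, by omega⟩) := by
    intro j
    exact hd ⟨j.val + 1, by omega⟩ (by simp [Fin.ext_iff])
  choose w hw using hwit
  have hinj : Function.Injective w := by
    intro a b hab
    have ha := hw a
    have hb := hw b
    rw [hab] at ha
    have : (⟨a.val + 1, by omega⟩ : Fin (r+1)) = ⟨b.val + 1, by omega⟩ := by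
      rcases ha with ⟨ha1, ha2⟩ | ⟨ha1, ha2⟩ <;> rcases hb with ⟨hb1, hb2⟩ | ⟨hb1, hb2⟩
      · rw [← ha1, hb1]
      · exfalso; rw [ha1] at hb1; exact absurd hb1.symm (by simp [Fin.ext_iff])
      · exfalso; rw [ha1] at hb1; exact absurd hb1 (by simp [Fin.ext_iff])
      · rw [← ha2, hb2]
    simpa [Fin.ext_iff] using this
  simpa using Fintype.card_le_of_injective w hinj


lemma pigeon {r n m : ℕ} (hr : 2 ≤ r) (f : Fin n → Fin m → Fin (r + 1)) (i : Fin n) :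
    ∃ z : Fin (r + 1), z ≠ 0 ∧ (univ.filter fun t => f i t = z).card ≤ m / r := by
  classical
  by_contra hcon
  push_neg at hcon
  have hsum : ∑ z ∈ (univ : Finset (Fin (r+1))).erase 0,
      (univ.filter fun t => f i t = z).card ≤ m := by
    have h := Finset.card_eq_sum_card_fiberwise
      (f := fun t : Fin m => f i t) (s := univ) (t := univ) (fun t _ => mem_univ _)
    have h2 : ∑ z ∈ (univ : Finset (Fin (r+1))).erase 0,
        (univ.filter fun t => f i t = z).card ≤
        ∑ z : Fin (r+1), (univ.filter fun t => f i t = z).card :=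
      Finset.sum_le_sum_of_subset (Finset.erase_subset _ _)
    calc _ ≤ _ := h2
      _ = (univ : Finset (Fin m)).card := h.symm
      _ = m := by simp
  have hlb : ∀ z ∈ (univ : Finset (Fin (r+1))).erase 0,
      m / r + 1 ≤ (univ.filter fun t => f i t = z).card := by
    intro z hzz
    have := hcon z (Finset.mem_erase.mp hzz).1
    omega
  have := Finset.card_nsmul_le_sum _ _ _ hlb
  rw [Finset.card_erase_of_mem (mem_univ 0)] at this
  simp only [Finset.card_univ, Fintype.card_fin, smul_eq_mul] at this
  have hcard : (r + 1 - 1) = r := by omega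
  rw [hcard] at this
  have h3 : r * (m / r + 1) ≤ m := le_trans this hsum
  have hmul : r * (m / r + 1) = r * (m / r) + r := by ring
  rw [hmul] at h3
  have := Nat.div_add_mod m r
  have := Nat.mod_lt m (show 0 < r by omega)
  omega

lemma keyineq {r n m : ℕ} (hr : 2 ≤ r) (f : Fin n → Fin m → Fin (r + 1))
    (hf : ∀ i j : Fin n, i ≠ j → RDifferent r m (f i) (f j)) :
    (n : ℝ) * (((r:ℝ) - 1) / r) ^ m * (1 / ((r:ℝ) - 1)) ^ (m / r) ≤ r := by
  classical
  have hR2 : (2:ℝ) ≤ (r:ℝ) := by exact_mod_cast hr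
  have hR0 : (0:ℝ) < r := by linarith
  have hR1 : (0:ℝ) < (r:ℝ) - 1 := by linarith
  set k : ℕ := m / r with hk
  set p : ℝ := ((r:ℝ) - 1) / r with hp
  set q : ℝ := 1 / ((r:ℝ) - 1) with hq
  have hp0 : 0 < p := div_pos hR1 hR0
  have hp1 : p ≤ 1 := by rw [hp, div_le_one hR0]; linarith
  have hq0 : 0 < q := by positivity
  have hq1 : q ≤ 1 := by rw [hq, div_le_one hR1]; linarith
  have h1p : 1 - p = 1 / (r:ℝ) := by rw [hp]; field_simp; ring
  have hpq : p * q = 1 - p := by rw [h1p, hp, hq]; field_simp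
  choose zi hzi0 hzik using fun i => pigeon hr f i
  -- per-i lower bound
  have hbound : ∀ i : Fin n, p ^ m * q ^ k ≤
      ∏ t : Fin m, (if f i t = 0 then p else if f i t = zi i then 1 - p else 1) := by
    intro i
    set c : ℕ := (univ.filter fun t => f i t = zi i).card with hc
    have step1 : ∏ t : Fin m, (p * q ^ (if f i t = zi i then 1 else 0)) ≤
        ∏ t : Fin m, (if f i t = 0 then p else if f i t = zi i then 1 - p else 1) := by
      apply Finset.prod_le_prod
      · intro t _; positivity
      · intro t _
        by_cases h1 : f i t = zi i
        · have h0 : f i t ≠ 0 := by rw [h1]; exact hzi0 i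
          rw [if_pos h1, if_neg h0, if_pos h1, pow_one, hpq]
        · rw [if_neg h1, pow_zero, mul_one]
          by_cases h0 : f i t = 0
          · rw [if_pos h0]
          · rw [if_neg h0, if_neg h1]; exact hp1
    have step2 : ∏ t : Fin m, (p * q ^ (if f i t = zi i then 1 else 0)) = p ^ m * q ^ c := by
      rw [Finset.prod_mul_distrib, Finset.prod_const, Finset.prod_pow_eq_pow_sum]
      congr 1
      · rw [Finset.card_univ, Fintype.card_fin]
      · congr 1
        rw [hc, Finset.card_filter]
    have step3 : q ^ k ≤ q ^ c := pow_le_pow_of_le_one hq0.le hq1 (hzik i)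
    calc p ^ m * q ^ k ≤ p ^ m * q ^ c := by
          exact mul_le_mul_of_nonneg_left step3 (by positivity)
      _ = ∏ t : Fin m, (p * q ^ (if f i t = zi i then 1 else 0)) := step2.symm
      _ ≤ _ := step1
  -- assembly
  have hφnn : ∀ (z : Fin (r+1)) (i : Fin n),
      (0:ℝ) ≤ ∏ t : Fin m, (if f i t = 0 then p else if f i t = z then 1 - p else 1) := by
    intro z i
    apply Finset.prod_nonneg
    intro t _
    split_ifs <;> [exact hp0.le; linarith; norm_num]
  calc (n : ℝ) * p ^ m * q ^ k = ∑ _i : Fin n, p ^ m * q ^ k := by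
        rw [Finset.sum_const, Finset.card_univ, Fintype.card_fin, nsmul_eq_mul]; ring
    _ ≤ ∑ i : Fin n, ∏ t : Fin m, (if f i t = 0 then p else if f i t = zi i then 1 - p else 1) :=
        Finset.sum_le_sum fun i _ => hbound i
    _ ≤ ∑ i : Fin n, ∑ z ∈ (univ : Finset (Fin (r+1))).erase 0,
          ∏ t : Fin m, (if f i t = 0 then p else if f i t = z then 1 - p else 1) := by
        refine Finset.sum_le_sum fun i _ => ?_
        exact Finset.single_le_sum (fun z _ => hφnn z i)
          (Finset.mem_erase.mpr ⟨hzi0 i, mem_univ _⟩)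
    _ = ∑ z ∈ (univ : Finset (Fin (r+1))).erase 0, ∑ i : Fin n,
          ∏ t : Fin m, (if f i t = 0 then p else if f i t = z then 1 - p else 1) :=
        Finset.sum_comm
    _ ≤ ∑ _z ∈ (univ : Finset (Fin (r+1))).erase 0, (1:ℝ) :=
        Finset.sum_le_sum fun z hzz =>
          survival p hp0.le hp1 f hf z (Finset.mem_erase.mp hzz).1
    _ = (r:ℝ) := by
        rw [Finset.sum_const, Finset.card_erase_of_mem (mem_univ 0), Finset.card_univ,
          Fintype.card_fin, nsmul_eq_mul, mul_one]
        norm_num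

lemma analytic {r n m : ℕ} (hr : 2 ≤ r) (hn : 2 ≤ n) (hm : 1 ≤ m) (hrm : r ≤ m)
    (key : (n : ℝ) * (((r:ℝ) - 1) / r) ^ m * (1 / ((r:ℝ) - 1)) ^ (m / r) ≤ r) :
    (1/8 : ℝ) * ((r : ℝ) / Real.logb 2 r) * Real.logb 2 n ≤ m := by
  have hR2 : (2:ℝ) ≤ (r:ℝ) := by exact_mod_cast hr
  have hR0 : (0:ℝ) < r := by linarith
  have hR1 : (0:ℝ) < (r:ℝ) - 1 := by linarith
  set k : ℕ := m / r with hk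
  set p : ℝ := ((r:ℝ) - 1) / r with hp
  set q : ℝ := 1 / ((r:ℝ) - 1) with hq
  have hp0 : 0 < p := div_pos hR1 hR0
  have hq0 : 0 < q := by positivity
  -- n ≤ r * (r/(r-1))^m * (r-1)^k
  have e1 : p ^ m * ((r:ℝ) / ((r:ℝ) - 1)) ^ m = 1 := by
    rw [← mul_pow]
    rw [show p * ((r:ℝ) / ((r:ℝ)-1)) = 1 by rw [hp]; field_simp]
    exact one_pow m
  have e2 : q ^ k * ((r:ℝ) - 1) ^ k = 1 := by
    rw [← mul_pow]
    rw [show q * ((r:ℝ)-1) = 1 by rw [hq]; exact one_div_mul_cancel hR1.ne']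
    exact one_pow k
  have hnle : (n:ℝ) ≤ (r:ℝ) * ((r:ℝ) / ((r:ℝ) - 1)) ^ m * ((r:ℝ) - 1) ^ k := by
    have hpos : (0:ℝ) < ((r:ℝ) / ((r:ℝ) - 1)) ^ m * ((r:ℝ) - 1) ^ k := by positivity
    calc (n:ℝ) = (n:ℝ) * ((p ^ m * ((r:ℝ) / ((r:ℝ)-1)) ^ m) * (q ^ k * ((r:ℝ)-1) ^ k)) := by
          rw [e1, e2]; ring
      _ = ((n:ℝ) * p ^ m * q ^ k) * (((r:ℝ) / ((r:ℝ)-1)) ^ m * ((r:ℝ)-1) ^ k) := by ring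
      _ ≤ (r:ℝ) * (((r:ℝ) / ((r:ℝ)-1)) ^ m * ((r:ℝ)-1) ^ k) :=
          mul_le_mul_of_nonneg_right key hpos.le
      _ = (r:ℝ) * ((r:ℝ) / ((r:ℝ) - 1)) ^ m * ((r:ℝ) - 1) ^ k := by ring
  have hn0 : (0:ℝ) < n := by positivity
  have hlog : Real.log n ≤ Real.log r + m * Real.log ((r:ℝ)/((r:ℝ)-1)) + k * Real.log ((r:ℝ)-1) := by
    calc Real.log n ≤ Real.log ((r:ℝ) * ((r:ℝ) / ((r:ℝ) - 1)) ^ m * ((r:ℝ) - 1) ^ k) :=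
          Real.log_le_log hn0 hnle
      _ = Real.log r + m * Real.log ((r:ℝ)/((r:ℝ)-1)) + k * Real.log ((r:ℝ)-1) := by
          rw [Real.log_mul (by positivity) (by positivity),
            Real.log_mul (by positivity) (by positivity), Real.log_pow, Real.log_pow]
  have hlog1 : Real.log ((r:ℝ)/((r:ℝ)-1)) ≤ 2 / r := by
    have h := Real.log_le_sub_one_of_pos (show (0:ℝ) < (r:ℝ)/((r:ℝ)-1) by positivity)
    have : (r:ℝ)/((r:ℝ)-1) - 1 ≤ 2 / r := by
      rw [div_sub_one hR1.ne', div_le_div_iff₀ hR1 hR0]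
      nlinarith
    linarith
  have hlog2 : Real.log ((r:ℝ)-1) ≤ Real.log r := Real.log_le_log hR1 (by linarith)
  have hkk : (k:ℝ) ≤ (m:ℝ) / r := by
    rw [hk]; exact_mod_cast Nat.cast_div_le
  have hlogR : (2:ℝ)/3 < Real.log r := by
    have h2 := Real.log_two_gt_d9
    have := Real.log_le_log (by norm_num : (0:ℝ) < 2) hR2
    linarith
  have hlogRpos : 0 < Real.log r := by linarith
  have hlogrnn : 0 ≤ Real.log ((r:ℝ)-1) := Real.log_nonneg (by linarith)
  have hm0 : (0:ℝ) ≤ (m:ℝ) := by positivity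
  have main : Real.log n ≤ Real.log r + ((m:ℝ)/r) * (4 * Real.log r) := by
    have t1 : (m:ℝ) * Real.log ((r:ℝ)/((r:ℝ)-1)) ≤ (m:ℝ) * (2/r) :=
      mul_le_mul_of_nonneg_left hlog1 hm0
    have t2 : (k:ℝ) * Real.log ((r:ℝ)-1) ≤ ((m:ℝ)/r) * Real.log r := by
      apply mul_le_mul hkk hlog2 hlogrnn (by positivity)
    have t3 : (m:ℝ) * (2/r) = ((m:ℝ)/r) * 2 := by ring
    have t4 : 2 + Real.log r ≤ 4 * Real.log r := by linarith
    have t5 : ((m:ℝ)/r) * 2 + ((m:ℝ)/r) * Real.log r = ((m:ℝ)/r) * (2 + Real.log r) := by ring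
    have t6 : ((m:ℝ)/r) * (2 + Real.log r) ≤ ((m:ℝ)/r) * (4 * Real.log r) :=
      mul_le_mul_of_nonneg_left t4 (by positivity)
    linarith
  -- final goal
  have hn2 : (2:ℝ) ≤ (n:ℝ) := by exact_mod_cast hn
  have hlogn0 : 0 ≤ Real.log n := Real.log_nonneg (by linarith)
  have hL2 : (0:ℝ) < Real.log 2 := Real.log_pos (by norm_num)
  have hgoal : (1/8 : ℝ) * ((r : ℝ) / Real.logb 2 r) * Real.logb 2 n
      = (r:ℝ) * Real.log n / (8 * Real.log r) := by
    rw [Real.logb, Real.logb]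
    field_simp
  rw [hgoal, div_le_iff₀ (by positivity)]
  -- suffices: r * log n ≤ m * (8 * log r)
  rcases le_or_gt ((r:ℝ)^2) (n:ℝ) with hcase | hcase
  · have h2r : 2 * Real.log r ≤ Real.log n := by
      have := Real.log_le_log (by positivity) hcase
      rw [Real.log_pow] at this
      push_cast at this
      linarith
    have h5 : (1/2) * Real.log n ≤ 4 * ((m:ℝ)/r) * Real.log r := by linarith
    have h6 := mul_le_mul_of_nonneg_left h5 hR0.le
    have h7 : (r:ℝ) * (4 * ((m:ℝ)/r) * Real.log r) = 4 * m * Real.log r := by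
      field_simp
    rw [h7] at h6
    linarith
  · have h2r : Real.log n ≤ 2 * Real.log r := by
      have := Real.log_le_log hn0 hcase.le
      rw [Real.log_pow] at this
      push_cast at this
      linarith
    have hmr : (r:ℝ) ≤ m := by exact_mod_cast hrm
    have b1 : (r:ℝ) * Real.log n ≤ (r:ℝ) * (2 * Real.log r) :=
      mul_le_mul_of_nonneg_left h2r hR0.le
    have b2 : (r:ℝ) * (2 * Real.log r) ≤ (m:ℝ) * (2 * Real.log r) :=
      mul_le_mul_of_nonneg_right hmr (by positivity)
    have b3 : (m:ℝ) * (2 * Real.log r) ≤ (m:ℝ) * (8 * Real.log r) :=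
      mul_le_mul_of_nonneg_left (by linarith) hm0
    linarith

theorem stmt14 :
    ∃ c : ℝ, 0 < c ∧ ∀ r n m : ℕ, 2 ≤ r → 2 ≤ n → 1 ≤ m →
      ∀ f : Fin n → Fin m → Fin (r + 1),
        (∀ i j : Fin n, i ≠ j → RDifferent r m (f i) (f j)) →
        c * ((r : ℝ) / Real.logb 2 r) * Real.logb 2 n ≤ m := by
  refine ⟨1/8, by norm_num, ?_⟩
  intro r n m hr hn hm f hf
  exact analytic hr hn hm (step_r_le_m hn f hf) (keyineq hr f hf)
end

section
/- For every integer r ≥ 2 and every real x ∈ [0,1], one has (1 − x + x/r)·h( (x/r)/(1 − x + x/r) ) ≤ (2 + log₂(2r))/r. -/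
noncomputable def binEnt (t : ℝ) : ℝ :=
  -t * Real.logb 2 t - (1 - t) * Real.logb 2 (1 - t)

set_option maxHeartbeats 1000000 in
theorem stmt16 (r : ℕ) (hr : 2 ≤ r) (x : ℝ) (hx : x ∈ Set.Icc (0 : ℝ) 1) :
    (1 - x + x / r) * binEnt ((x / r) / (1 - x + x / r)) ≤
      (2 + Real.logb 2 (2 * r)) / r := by
  obtain ⟨hx0, hx1⟩ := hx
  have hr2 : (2:ℝ) ≤ (r:ℝ) := by exact_mod_cast hr
  have hrpos : (0:ℝ) < (r:ℝ) := by linarith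
  have hl2 : (0:ℝ) < Real.log 2 := Real.log_pos one_lt_two
  have hl2' : (2:ℝ)/3 < Real.log 2 := by
    have := Real.log_two_gt_d9; linarith
  set a : ℝ := x / r with ha
  set s : ℝ := 1 - x + x / r with hs
  have ha0 : 0 ≤ a := div_nonneg hx0 hrpos.le
  have ha1 : a ≤ 1 / r := by
    rw [ha, div_le_div_iff₀ hrpos hrpos]; nlinarith
  have hsa : a ≤ s := by rw [ha, hs]; linarith
  have hs1 : s ≤ 1 := by
    have h1r : x / r ≤ x := by
      rw [div_le_iff₀ hrpos]; nlinarith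
    rw [hs]; linarith
  have hspos : 0 < s := by
    rcases eq_or_lt_of_le hx1 with h | h
    · rw [hs, h]
      have : (0:ℝ) < 1 / (r:ℝ) := by positivity
      linarith
    · have : 0 ≤ x / r := ha0
      rw [hs]; linarith
  have hexp : s * binEnt (a / s) =
      (-a * Real.logb 2 (a / s)) + (-(s - a) * Real.logb 2 ((s - a) / s)) := by
    rw [binEnt, one_sub_div hspos.ne']
    field_simp
    ring
  have claim1 : -a * Real.logb 2 (a / s) ≤ Real.logb 2 r / r + 1 / (r * Real.log 2) := by
    have hlogbr : 0 ≤ Real.logb 2 (r:ℝ) := Real.logb_nonneg one_lt_two (by linarith)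
    rcases eq_or_lt_of_le hx0 with h | hxpos
    · rw [ha, ← h]
      simp
      positivity
    · have hapos : 0 < a := div_pos hxpos hrpos
      have h1 : Real.logb 2 (a / s) = Real.logb 2 a - Real.logb 2 s :=
        Real.logb_div hapos.ne' hspos.ne'
      have hls : Real.logb 2 s ≤ 0 := Real.logb_nonpos one_lt_two hspos.le hs1
      have h2 : -a * Real.logb 2 (a / s) ≤ -a * Real.logb 2 a := by
        rw [h1]; nlinarith
      have h3 : Real.logb 2 a = Real.logb 2 x - Real.logb 2 (r:ℝ) :=
        Real.logb_div hxpos.ne' hrpos.ne'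
      have h4 : -x * Real.log x ≤ 1 - x := by
        have hlog := Real.log_le_sub_one_of_pos (x := 1/x) (by positivity)
        rw [Real.log_div one_ne_zero hxpos.ne', Real.log_one] at hlog
        have := mul_le_mul_of_nonneg_left hlog hx0
        have hxx : x * (1/x - 1) = 1 - x := by field_simp
        nlinarith
      have h5 : -a * Real.logb 2 a = (x / r) * Real.logb 2 (r:ℝ) + (-x * Real.log x) / (r * Real.log 2) := by
        rw [h3, ha, Real.logb, Real.logb]
        field_simp
        ring
      have h6 : (x / r) * Real.logb 2 (r:ℝ) ≤ Real.logb 2 (r:ℝ) / r := by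
        rw [div_mul_eq_mul_div, div_le_div_iff₀ hrpos hrpos]
        nlinarith [mul_le_mul_of_nonneg_right (mul_le_mul_of_nonneg_right hx1 hlogbr) hrpos.le]
      have h7 : (-x * Real.log x) / (r * Real.log 2) ≤ 1 / (r * Real.log 2) := by
        gcongr
        linarith
      linarith [h2, h5 ▸ h2]
  have claim2 : -(s - a) * Real.logb 2 ((s - a) / s) ≤ 1 / (r * Real.log 2) := by
    rcases eq_or_lt_of_le hx1 with h | hxlt
    · have hz : s - a = 0 := by rw [hs, ha, ← h]; ring
      rw [hz]
      simp
      positivity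
    · have hb : 0 < s - a := by rw [hs, ha]; linarith
      have h2 : Real.log (s/(s-a)) ≤ s/(s-a) - 1 := Real.log_le_sub_one_of_pos (by positivity)
      have h3 : -(s-a) * Real.logb 2 ((s-a)/s) = ((s-a) * Real.log (s/(s-a))) / Real.log 2 := by
        rw [Real.logb, Real.log_div hb.ne' hspos.ne', Real.log_div hspos.ne' hb.ne']
        ring
      have he : (s-a) * (s/(s-a) - 1) = a := by field_simp; ring
      have h4 : (s-a) * Real.log (s/(s-a)) ≤ a := by
        have := mul_le_mul_of_nonneg_left h2 hb.le
        linarith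
      rw [h3]
      have : ((s-a) * Real.log (s/(s-a))) / Real.log 2 ≤ a / Real.log 2 := by gcongr
      have haa : a / Real.log 2 ≤ 1 / (r * Real.log 2) := by
        calc a / Real.log 2 ≤ (1 / r) / Real.log 2 := by gcongr
          _ = 1 / (r * Real.log 2) := by rw [div_div]
      linarith
  have hlogb2r : Real.logb 2 (2 * (r:ℝ)) = 1 + Real.logb 2 (r:ℝ) := by
    rw [Real.logb_mul two_ne_zero (by positivity)]
    rw [Real.logb_self_eq_one one_lt_two]
  have hfin : 2 * (1 / (r * Real.log 2)) ≤ 3 / r := by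
    have hq : 2 * (1 / (r * Real.log 2)) = 2 / (r * Real.log 2) := by ring
    rw [hq, div_le_div_iff₀ (by positivity) hrpos]
    have := mul_lt_mul_of_pos_left hl2' hrpos
    linarith
  have hgoal : Real.logb 2 (r:ℝ) / r + 2 * (1 / (r * Real.log 2)) ≤ (2 + Real.logb 2 (2*(r:ℝ))) / r := by
    rw [hlogb2r]
    have : (2 + (1 + Real.logb 2 (r:ℝ))) / r = Real.logb 2 (r:ℝ) / r + 3 / r := by ring
    rw [this]
    linarith
  calc s * binEnt (a / s) = _ := hexp
    _ ≤ Real.logb 2 (r:ℝ) / r + 2 * (1 / (r * Real.log 2)) := by linarith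
    _ ≤ (2 + Real.logb 2 (2*(r:ℝ))) / r := hgoal
end

section
/- For every integer r ≥ 2 and every real x ∈ (0,1], one has (x/r)·log₂( (r − r·x + x)/x ) ≤ log₂(2r)/r. -/
theorem stmt17 (r : ℕ) (hr : 2 ≤ r) (x : ℝ) (hx : x ∈ Set.Ioc (0 : ℝ) 1) :
    (x / r) * Real.logb 2 (((r : ℝ) - r * x + x) / x) ≤ Real.logb 2 (2 * r) / r := by
  obtain ⟨hx0, hx1⟩ := hx
  have hr2 : (2:ℝ) ≤ (r:ℝ) := by exact_mod_cast hr
  have hrpos : (0:ℝ) < r := by linarith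
  have hnum1 : (1:ℝ) ≤ (r:ℝ) - r*x + x := by nlinarith
  have hnumr : (r:ℝ) - r*x + x ≤ r := by nlinarith
  have hlog2 : 0 < Real.log 2 := Real.log_pos (by norm_num)
  have key : x * Real.log (((r:ℝ) - r*x + x)/x) ≤ Real.log (2*r) := by
    rw [Real.log_div (by linarith) (ne_of_gt hx0),
        Real.log_mul two_ne_zero (ne_of_gt hrpos)]
    have h1 : x * Real.log ((r:ℝ) - r*x + x) ≤ Real.log r := by
      have hle : Real.log ((r:ℝ) - r*x + x) ≤ Real.log r :=
        Real.log_le_log (by linarith) hnumr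
      have hnn : 0 ≤ Real.log ((r:ℝ) - r*x + x) := Real.log_nonneg hnum1
      nlinarith
    have h2 : -(x * Real.log x) ≤ Real.log 2 := by
      have hinv : Real.log (1/x) ≤ (1/x) / Real.exp 1 := by
        have h := Real.add_one_le_exp (Real.log (1/x) - 1)
        rw [Real.exp_sub, Real.exp_log (by positivity)] at h
        linarith
      have hlx : Real.log (1/x) = -Real.log x := by
        rw [one_div, Real.log_inv]
      have hxe : x * Real.log (1/x) ≤ x * ((1/x)/Real.exp 1) :=
        mul_le_mul_of_nonneg_left hinv (le_of_lt hx0)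
      have hcalc : x * ((1/x)/Real.exp 1) = 1/Real.exp 1 := by
        field_simp
      have he2 : (2:ℝ) < Real.exp 1 := by
        have := Real.exp_one_gt_d9; linarith
      have h1e : 1/Real.exp 1 < 1/2 := by
        apply one_div_lt_one_div_of_lt <;> linarith
      have hl2 : (0.6931471803:ℝ) < Real.log 2 := Real.log_two_gt_d9
      rw [hlx] at hxe
      rw [hcalc] at hxe
      linarith
    have hsplit : x * (Real.log ((r:ℝ) - r*x + x) - Real.log x)
        = x * Real.log ((r:ℝ) - r*x + x) - x * Real.log x := by ring
    linarith [hsplit]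
  have hA : x * (Real.log (((r:ℝ) - r*x + x)/x)) = x * Real.log (((r:ℝ) - r*x + x)/x) := rfl
  rw [Real.logb, Real.logb]
  calc (x/r) * (Real.log (((r:ℝ) - r*x + x)/x) / Real.log 2)
      = (x * Real.log (((r:ℝ) - r*x + x)/x)) / (r * Real.log 2) := by ring
    _ ≤ Real.log (2*r) / (r * Real.log 2) := by
        apply div_le_div_of_nonneg_right key
        exact (mul_pos hrpos hlog2).le
    _ = Real.log (2*r) / Real.log 2 / r := by ring
end

section
/- There exists an absolute constant C > 0 such that for all integers n ≥ 3 and k with 2 ≤ k ≤ n there exists an (n,k)-strongly-selective family of subsets of [n] of size at most C·min{ n , k²·log₂ n }. -/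
/-- A family `F` of subsets of `[n]` is `(n,k)`-strongly-selective if for every
subset `Z` of `[n]` with `|Z| ≤ k` and every `z ∈ Z` there is `A ∈ F` with
`Z ∩ A = {z}`. -/
def StronglySelective (n k : ℕ) (F : Finset (Finset (Fin n))) : Prop :=
  ∀ Z : Finset (Fin n), Z.card ≤ k → ∀ z ∈ Z, ∃ A ∈ F, Z ∩ A = {z}


open Finset

/-- the "selected" set of a function -/
def sel {n k : ℕ} (g : Fin n → Fin k) [NeZero k] : Finset (Fin n) :=
  Finset.univ.filter (fun i => g i = 0)

/-- the per-pair good set -/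
def selT (n k : ℕ) [NeZero k] (Z : Finset (Fin n)) (z : Fin n) : Finset (Fin n → Fin k) :=
  Fintype.piFinset (fun i => if i = z then {0} else if i ∈ Z then {0}ᶜ else Finset.univ)

lemma mem_selT {n k : ℕ} [NeZero k] {Z : Finset (Fin n)} {z : Fin n} (hz : z ∈ Z)
    (g : Fin n → Fin k) : g ∈ selT n k Z z ↔ Z ∩ sel g = {z} := by
  rw [selT, Fintype.mem_piFinset]
  constructor
  · intro h
    ext a
    simp only [Finset.mem_inter, Finset.mem_singleton, sel, Finset.mem_filter,
      Finset.mem_univ, true_and]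
    constructor
    · rintro ⟨haZ, ha0⟩
      by_contra hne
      have := h a
      rw [if_neg hne, if_pos haZ, Finset.mem_compl, Finset.mem_singleton] at this
      exact this ha0
    · rintro rfl
      refine ⟨hz, ?_⟩
      have := h a
      rwa [if_pos rfl, Finset.mem_singleton] at this
  · intro h i
    split_ifs with h1 h2
    · subst h1
      have : i ∈ Z ∩ sel g := h ▸ Finset.mem_singleton_self i
      simp only [sel, Finset.mem_inter, Finset.mem_filter, Finset.mem_univ, true_and] at this
      simp [this.2]
    · rw [Finset.mem_compl, Finset.mem_singleton]
      intro h0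
      have : i ∈ Z ∩ sel g := by
        simp only [sel, Finset.mem_inter, Finset.mem_filter, Finset.mem_univ, true_and]
        exact ⟨h2, h0⟩
      rw [h, Finset.mem_singleton] at this
      exact h1 this
    · exact Finset.mem_univ _

lemma card_selT {n k : ℕ} [NeZero k] (hk : 2 ≤ k) (hkn : k ≤ n) {Z : Finset (Fin n)}
    {z : Fin n} (hz : z ∈ Z) (hZ : Z.card ≤ k) :
    (k-1)^(k-1) * k^(n-k) ≤ (selT n k Z z).card := by
  classical
  have ht1 : 1 ≤ Z.card := Finset.card_pos.2 ⟨z, hz⟩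
  rw [selT, Fintype.card_piFinset]
  set c : Fin n → ℕ := fun i => if i = z then 1 else if i ∈ Z then k - 1 else k with hc
  have hcard : ∀ i : Fin n,
      (if i = z then ({0} : Finset (Fin k)) else if i ∈ Z then {0}ᶜ else Finset.univ).card = c i := by
    intro i
    simp only [hc]
    split_ifs <;> simp [Finset.card_compl]
  rw [Finset.prod_congr rfl (fun i _ => hcard i)]
  have hsplit : (∏ i ∈ Z, c i) * (∏ i ∈ Zᶜ, c i) = ∏ i, c i :=
    Finset.prod_mul_prod_compl Z c
  have hZc : (∏ i ∈ Zᶜ, c i) = k ^ (n - Z.card) := by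
    have hconst : ∀ i ∈ Zᶜ, c i = k := by
      intro i hi
      rw [Finset.mem_compl] at hi
      have hiz : i ≠ z := fun h => hi (h ▸ hz)
      simp only [hc, if_neg hiz, if_neg hi]
    rw [Finset.prod_congr rfl hconst, Finset.prod_const, Finset.card_compl, Fintype.card_fin]
  have hZp : (∏ i ∈ Z, c i) = (k - 1) ^ (Z.card - 1) := by
    rw [← Finset.mul_prod_erase Z c hz]
    have h1 : c z = 1 := by simp [hc]
    have hconst : ∀ i ∈ Z.erase z, c i = k - 1 := by
      intro i hi
      rw [Finset.mem_erase] at hi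
      simp only [hc, if_neg hi.1, if_pos hi.2]
    rw [h1, one_mul, Finset.prod_congr rfl hconst, Finset.prod_const,
      Finset.card_erase_of_mem hz]
  rw [← hsplit, hZp, hZc]
  calc (k-1)^(k-1) * k^(n-k)
      = ((k-1)^(Z.card-1) * (k-1)^(k-Z.card)) * k^(n-k) := by
        rw [← pow_add]
        have : Z.card - 1 + (k - Z.card) = k - 1 := by omega
        rw [this]
    _ ≤ ((k-1)^(Z.card-1) * k^(k-Z.card)) * k^(n-k) := by
        gcongr <;> omega
    _ = (k-1)^(Z.card-1) * k^(n-Z.card) := by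
        rw [mul_assoc, ← pow_add]
        have : k - Z.card + (n - k) = n - Z.card := by omega
        rw [this]


lemma aux_pow {k : ℕ} (hk : 2 ≤ k) : (k:ℝ)^(k-1) ≤ 4 * ((k:ℝ)-1)^(k-1) := by
  obtain ⟨j, rfl⟩ : ∃ j, k = j + 1 := ⟨k - 1, by omega⟩
  have hj1 : 1 ≤ j := by omega
  have hjR : (1:ℝ) ≤ (j:ℝ) := by exact_mod_cast hj1
  have hj0 : (0:ℝ) < j := by linarith
  have step : ((j:ℝ)+1) ≤ (j:ℝ) * Real.exp (1/(j:ℝ)) := by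
    have h1 : 1/(j:ℝ) + 1 ≤ Real.exp (1/(j:ℝ)) := Real.add_one_le_exp _
    have := mul_le_mul_of_nonneg_left h1 hj0.le
    calc ((j:ℝ)+1) = (j:ℝ) * (1/(j:ℝ) + 1) := by field_simp; ring
      _ ≤ (j:ℝ) * Real.exp (1/(j:ℝ)) := this
  have hpow : ((j:ℝ)+1)^j ≤ ((j:ℝ) * Real.exp (1/(j:ℝ)))^j :=
    pow_le_pow_left₀ (by positivity) step j
  have hexp : ((j:ℝ) * Real.exp (1/(j:ℝ)))^j = (j:ℝ)^j * Real.exp 1 := by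
    rw [mul_pow, ← Real.exp_nat_mul]
    congr 2
    field_simp
  have he4 : Real.exp 1 ≤ 4 := by
    have := Real.exp_one_lt_d9
    linarith
  have hfin : ((j:ℝ)+1)^j ≤ 4 * (j:ℝ)^j := by
    calc ((j:ℝ)+1)^j ≤ (j:ℝ)^j * Real.exp 1 := hpow.trans hexp.le
      _ ≤ (j:ℝ)^j * 4 := by
          have : (0:ℝ) ≤ (j:ℝ)^j := by positivity
          nlinarith
      _ = 4 * (j:ℝ)^j := by ring
  have hsub : j + 1 - 1 = j := by omega
  rw [hsub]
  push_cast
  convert hfin using 3 <;> push_cast <;> ring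

lemma exists_selective (n k : ℕ) (hn : 3 ≤ n) (hk : 2 ≤ k) (hkn : k ≤ n) :
    ∃ F : Finset (Finset (Fin n)), StronglySelective n k F ∧
      F.card ≤ 32 * k^2 * (Nat.log 2 n + 1) := by
  classical
  haveI : NeZero k := ⟨by omega⟩
  set L : ℕ := Nat.log 2 n + 1 with hL
  set m : ℕ := 32 * k^2 * L with hm
  set s : ℕ := (k-1)^(k-1) * k^(n-k) with hs
  set Bad : Finset (Fin n) × Fin n → Finset (Fin m → Fin n → Fin k) :=
    fun p => Fintype.piFinset (fun _ => (selT n k p.1 p.2)ᶜ) with hBad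
  set P : Finset (Finset (Fin n) × Fin n) :=
    Finset.univ.filter (fun p => p.1.card ≤ k ∧ p.2 ∈ p.1) with hP
  have hkR : (2:ℝ) ≤ (k:ℝ) := by exact_mod_cast hk
  have key : ∃ ω : Fin m → Fin n → Fin k, ∀ Z : Finset (Fin n), Z.card ≤ k →
      ∀ z ∈ Z, ∃ A : Fin m, Z ∩ sel (ω A) = {z} := by
    by_contra hcon
    push_neg at hcon
    have hsub : (Finset.univ : Finset (Fin m → Fin n → Fin k)) ⊆ P.biUnion Bad := by
      intro ω _
      obtain ⟨Z, hZ, z, hzZ, hA⟩ := hcon ω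
      refine Finset.mem_biUnion.2 ⟨(Z, z), ?_, ?_⟩
      · rw [hP, Finset.mem_filter]
        exact ⟨Finset.mem_univ _, hZ, hzZ⟩
      · rw [hBad, Fintype.mem_piFinset]
        intro A
        rw [Finset.mem_compl, mem_selT hzZ]
        exact hA A
    -- counting (natural numbers)
    have hcount : ((k^n)^m : ℕ) ≤ P.card * (k^n - s)^m := by
      have h3 : ∀ p ∈ P, (Bad p).card ≤ (k^n - s)^m := by
        intro p hp
        rw [hP, Finset.mem_filter] at hp
        have hps : s ≤ (selT n k p.1 p.2).card := card_selT hk hkn hp.2.2 hp.2.1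
        rw [hBad, Fintype.card_piFinset]
        calc (∏ _A : Fin m, ((selT n k p.1 p.2)ᶜ).card)
            = (((selT n k p.1 p.2)ᶜ).card)^m := by
              rw [Finset.prod_const, Finset.card_univ, Fintype.card_fin]
          _ ≤ (k^n - s)^m := by
              apply Nat.pow_le_pow_left
              rw [Finset.card_compl]
              have hcf : Fintype.card (Fin n → Fin k) = k^n := by
                rw [Fintype.card_fun, Fintype.card_fin, Fintype.card_fin]
              rw [hcf]
              exact Nat.sub_le_sub_left hps _
      have h4 : (Finset.univ : Finset (Fin m → Fin n → Fin k)).card = (k^n)^m := by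
        rw [Finset.card_univ, Fintype.card_fun, Fintype.card_fun]
        simp [Fintype.card_fin]
      calc ((k^n)^m : ℕ) = (Finset.univ : Finset (Fin m → Fin n → Fin k)).card := h4.symm
        _ ≤ (P.biUnion Bad).card := Finset.card_le_card hsub
        _ ≤ ∑ p ∈ P, (Bad p).card := Finset.card_biUnion_le
        _ ≤ ∑ _p ∈ P, (k^n - s)^m := Finset.sum_le_sum h3
        _ = P.card * (k^n - s)^m := by rw [Finset.sum_const, smul_eq_mul]
    -- bound on the number of pairs
    have hPcard : P.card ≤ (k+1) * n^(k+1) := by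
      have hterm : ∀ i ∈ Finset.range (k+1),
          (Finset.powersetCard i (Finset.univ : Finset (Fin n))).card ≤ n^k := by
        intro i hi
        rw [Finset.mem_range] at hi
        rw [Finset.card_powersetCard, Finset.card_univ, Fintype.card_fin]
        exact (Nat.choose_le_pow n i).trans (Nat.pow_le_pow_right (by omega) (by omega))
      have hsub2 : P ⊆ ((Finset.range (k+1)).biUnion
          (fun i => Finset.powersetCard i (Finset.univ : Finset (Fin n)))) ×ˢ Finset.univ := by
        intro p hp
        rw [hP, Finset.mem_filter] at hp
        rw [Finset.mem_product]
        exact ⟨Finset.mem_biUnion.2 ⟨p.1.card, Finset.mem_range.2 (by omega),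
          Finset.mem_powersetCard_univ.2 rfl⟩, Finset.mem_univ _⟩
      calc P.card ≤ _ := Finset.card_le_card hsub2
        _ = ((Finset.range (k+1)).biUnion
              (fun i => Finset.powersetCard i (Finset.univ : Finset (Fin n)))).card * n := by
            rw [Finset.card_product, Finset.card_univ, Fintype.card_fin]
        _ ≤ (∑ i ∈ Finset.range (k+1),
              (Finset.powersetCard i (Finset.univ : Finset (Fin n))).card) * n :=
            Nat.mul_le_mul_right _ Finset.card_biUnion_le
        _ ≤ ((k+1) * n^k) * n := by
            apply Nat.mul_le_mul_right
            calc (∑ i ∈ Finset.range (k+1),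
                  (Finset.powersetCard i (Finset.univ : Finset (Fin n))).card)
                ≤ ∑ _i ∈ Finset.range (k+1), n^k := Finset.sum_le_sum hterm
              _ = (k+1) * n^k := by rw [Finset.sum_const, Finset.card_range, smul_eq_mul]
        _ = (k+1) * n^(k+1) := by ring
    -- move to the reals
    have hk1 : 1 ≤ k := by omega
    have hsK : s ≤ k^n := by
      calc s ≤ k^(k-1) * k^(n-k) := Nat.mul_le_mul_right _ (Nat.pow_le_pow_left (by omega) _)
        _ = k^(k-1+(n-k)) := (pow_add k _ _).symm
        _ ≤ k^n := Nat.pow_le_pow_right (by omega) (by omega)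
    set K : ℝ := (k:ℝ)^n with hK
    have hK0 : 0 < K := by positivity
    have hSR : ((s:ℕ):ℝ) = ((k:ℝ)-1)^(k-1) * (k:ℝ)^(n-k) := by
      rw [hs]
      push_cast [Nat.cast_sub hk1]
      ring
    have hK4S : K ≤ 4 * (k:ℝ) * (s:ℝ) := by
      have hkey : (k:ℝ)^(k-1) * ((k:ℝ)^(n-k) * (k:ℝ)) = K := by
        rw [hK, ← pow_succ (k:ℝ) (n-k), ← pow_add]
        congr 1
        omega
      rw [← hkey, hSR]
      have h4 := aux_pow hk
      have hpos : (0:ℝ) ≤ (k:ℝ)^(n-k) * (k:ℝ) := by positivity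
      calc (k:ℝ)^(k-1) * ((k:ℝ)^(n-k) * (k:ℝ))
          ≤ (4 * ((k:ℝ)-1)^(k-1)) * ((k:ℝ)^(n-k) * (k:ℝ)) :=
            mul_le_mul_of_nonneg_right h4 hpos
        _ = 4 * (k:ℝ) * (((k:ℝ)-1)^(k-1) * (k:ℝ)^(n-k)) := by ring
    have hstep : ((k^n - s : ℕ):ℝ) ≤ K * Real.exp (-(1/(4*(k:ℝ)))) := by
      rw [Nat.cast_sub hsK]
      push_cast
      have hq : K * (1/(4*(k:ℝ))) ≤ (s:ℝ) := by
        rw [mul_one_div, div_le_iff₀ (by positivity)]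
        calc K ≤ 4 * (k:ℝ) * (s:ℝ) := hK4S
          _ = (s:ℝ) * (4 * (k:ℝ)) := by ring
      have h2 : (1:ℝ) - 1/(4*(k:ℝ)) ≤ Real.exp (-(1/(4*(k:ℝ)))) := by
        have := Real.add_one_le_exp (-(1/(4*(k:ℝ))))
        linarith
      calc K - (s:ℝ) ≤ K * (1 - 1/(4*(k:ℝ))) := by rw [mul_one_sub]; linarith
        _ ≤ K * Real.exp (-(1/(4*(k:ℝ)))) := mul_le_mul_of_nonneg_left h2 hK0.le
    have hmdiv : (m:ℝ) * (1/(4*(k:ℝ))) = 8*(k:ℝ)*(L:ℕ) := by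
      rw [hm]
      push_cast
      field_simp
      ring
    have hPexp : (P.card : ℝ) < Real.exp ((m:ℝ) * (1/(4*(k:ℝ)))) := by
      rw [hmdiv]
      have hnR : (3:ℝ) ≤ (n:ℝ) := by exact_mod_cast hn
      have h1 : (P.card : ℝ) ≤ ((k:ℝ)+1) * (n:ℝ)^(k+1) := by
        have := hPcard
        exact_mod_cast this
      have h2 : ((k:ℝ)+1) * (n:ℝ)^(k+1) ≤ (n:ℝ)^(k+3) := by
        have hkn2 : (k:ℝ)+1 ≤ (n:ℝ)^2 := by
          have hknR : (k:ℝ) ≤ (n:ℝ) := by exact_mod_cast hkn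
          nlinarith
        calc ((k:ℝ)+1) * (n:ℝ)^(k+1) ≤ (n:ℝ)^2 * (n:ℝ)^(k+1) := by
              apply mul_le_mul_of_nonneg_right hkn2 (by positivity)
          _ = (n:ℝ)^(k+3) := by rw [← pow_add]; ring_nf
      have hn2L : (n:ℝ) < (2:ℝ)^L := by
        have := Nat.lt_pow_succ_log_self (by norm_num : 1 < 2) n
        exact_mod_cast this
      have h3 : (n:ℝ)^(k+3) < ((2:ℝ)^L)^(k+3) := by
        apply pow_lt_pow_left₀ hn2L (by positivity)
        omega
      have h4 : ((2:ℝ)^L)^(k+3) ≤ Real.exp (8*(k:ℝ)*(L:ℕ)) := by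
        rw [← pow_mul]
        have h2e : (2:ℝ) ≤ Real.exp 1 := by
          have := Real.exp_one_gt_d9
          linarith
        calc (2:ℝ)^(L*(k+3)) ≤ (Real.exp 1)^(L*(k+3)) :=
              pow_le_pow_left₀ (by norm_num) h2e _
          _ = Real.exp ((L*(k+3) : ℕ)) := by
              rw [← Real.exp_nat_mul, mul_one]
          _ ≤ Real.exp (8*(k:ℝ)*(L:ℕ)) := by
              apply Real.exp_le_exp.2
              have : (L*(k+3) : ℕ) ≤ 8*k*L := by nlinarith
              calc ((L*(k+3) : ℕ) : ℝ) ≤ ((8*k*L : ℕ) : ℝ) := by exact_mod_cast this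
                _ = 8*(k:ℝ)*(L:ℕ) := by push_cast; ring
      calc (P.card : ℝ) ≤ ((k:ℝ)+1) * (n:ℝ)^(k+1) := h1
        _ ≤ (n:ℝ)^(k+3) := h2
        _ < ((2:ℝ)^L)^(k+3) := h3
        _ ≤ Real.exp (8*(k:ℝ)*(L:ℕ)) := h4
    -- final contradiction
    have hfinal : (P.card : ℝ) * ((k^n - s:ℕ):ℝ)^m < K^m := by
      have hnn : (0:ℝ) ≤ ((k^n - s:ℕ):ℝ) := Nat.cast_nonneg _
      have hbound : ((k^n - s:ℕ):ℝ)^m ≤ (K * Real.exp (-(1/(4*(k:ℝ)))))^m :=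
        pow_le_pow_left₀ hnn hstep m
      have hEm : (K * Real.exp (-(1/(4*(k:ℝ)))))^m
          = K^m * Real.exp (-((m:ℝ) * (1/(4*(k:ℝ))))) := by
        rw [mul_pow, ← Real.exp_nat_mul, mul_neg]
      calc (P.card : ℝ) * ((k^n - s:ℕ):ℝ)^m
          ≤ (P.card : ℝ) * (K^m * Real.exp (-((m:ℝ) * (1/(4*(k:ℝ)))))) :=
            mul_le_mul_of_nonneg_left (hbound.trans hEm.le) (Nat.cast_nonneg _)
        _ < Real.exp ((m:ℝ) * (1/(4*(k:ℝ)))) * (K^m * Real.exp (-((m:ℝ) * (1/(4*(k:ℝ)))))) := by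
            apply mul_lt_mul_of_pos_right hPexp (by positivity)
        _ = K^m := by
            rw [Real.exp_neg]
            have h0 : Real.exp ((m:ℝ) * (1/(4*(k:ℝ)))) ≠ 0 := Real.exp_ne_zero _
            field_simp
    have hRcount : K^m ≤ (P.card : ℝ) * ((k^n - s:ℕ):ℝ)^m := by
      have := hcount
      have hc : (((k^n)^m : ℕ) : ℝ) ≤ ((P.card * (k^n - s)^m : ℕ) : ℝ) := by exact_mod_cast this
      calc K^m = (((k^n)^m : ℕ) : ℝ) := by rw [hK]; push_cast; ring
        _ ≤ ((P.card * (k^n - s)^m : ℕ) : ℝ) := hc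
        _ = (P.card : ℝ) * ((k^n - s:ℕ):ℝ)^m := by push_cast; ring
    linarith
  obtain ⟨ω, hω⟩ := key
  refine ⟨Finset.image (fun A => sel (ω A)) Finset.univ, ?_, ?_⟩
  · intro Z hZ z hz
    obtain ⟨A, hA⟩ := hω Z hZ z hz
    exact ⟨sel (ω A), Finset.mem_image_of_mem _ (Finset.mem_univ A), hA⟩
  · calc (Finset.image (fun A => sel (ω A)) Finset.univ).card
        ≤ (Finset.univ : Finset (Fin m)).card := Finset.card_image_le
      _ = m := by rw [Finset.card_univ, Fintype.card_fin]

theorem stmt19 :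
    ∃ C : ℝ, 0 < C ∧ ∀ n k : ℕ, 3 ≤ n → 2 ≤ k → k ≤ n →
      ∃ F : Finset (Finset (Fin n)), StronglySelective n k F ∧
        (F.card : ℝ) ≤ C * min (n : ℝ) ((k : ℝ) ^ 2 * Real.logb 2 n) := by
  refine ⟨64, by norm_num, ?_⟩
  intro n k hn hk hkn
  have hnR : (3:ℝ) ≤ (n:ℝ) := by exact_mod_cast hn
  have hlogb1 : (1:ℝ) ≤ Real.logb 2 n := by
    rw [show (1:ℝ) = Real.logb 2 2 from (Real.logb_self_eq_one (by norm_num)).symm]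
    apply Real.logb_le_logb_of_le (by norm_num) (by norm_num)
    linarith
  by_cases hc : (n:ℝ) ≤ (k:ℝ)^2 * Real.logb 2 n
  · -- singletons
    refine ⟨Finset.univ.image (fun z : Fin n => ({z} : Finset (Fin n))), ?_, ?_⟩
    · intro Z _ z hz
      refine ⟨{z}, Finset.mem_image_of_mem _ (Finset.mem_univ z), ?_⟩
      rw [Finset.inter_eq_right]
      simpa using hz
    · rw [min_eq_left hc]
      have hcard : (Finset.univ.image (fun z : Fin n => ({z} : Finset (Fin n)))).card ≤ n := by
        calc _ ≤ (Finset.univ : Finset (Fin n)).card := Finset.card_image_le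
          _ = n := by rw [Finset.card_univ, Fintype.card_fin]
      have : ((Finset.univ.image (fun z : Fin n => ({z} : Finset (Fin n)))).card : ℝ) ≤ n := by
        exact_mod_cast hcard
      linarith
  · push_neg at hc
    rw [min_eq_right hc.le]
    obtain ⟨F, hF, hFcard⟩ := exists_selective n k hn hk hkn
    refine ⟨F, hF, ?_⟩
    have hLlog : ((Nat.log 2 n + 1 : ℕ) : ℝ) ≤ 2 * Real.logb 2 n := by
      have hlogle : ((Nat.log 2 n : ℕ) : ℝ) ≤ Real.logb 2 n := by
        have hp : (2:ℕ)^(Nat.log 2 n) ≤ n := Nat.pow_log_le_self 2 (by omega)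
        have hpR : ((2:ℝ))^(Nat.log 2 n) ≤ (n:ℝ) := by exact_mod_cast hp
        calc ((Nat.log 2 n : ℕ) : ℝ) = Real.logb 2 ((2:ℝ)^(Nat.log 2 n)) := by
              rw [Real.logb_pow, Real.logb_self_eq_one (by norm_num), mul_one]
          _ ≤ Real.logb 2 n := Real.logb_le_logb_of_le (by norm_num) (by positivity) hpR
      push_cast
      linarith
    have hFR : (F.card : ℝ) ≤ 32 * (k:ℝ)^2 * ((Nat.log 2 n + 1 : ℕ) : ℝ) := by
      exact_mod_cast hFcard
    have hk0 : (0:ℝ) ≤ (k:ℝ)^2 := by positivity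
    calc (F.card : ℝ) ≤ 32 * (k:ℝ)^2 * ((Nat.log 2 n + 1 : ℕ) : ℝ) := hFR
      _ ≤ 32 * (k:ℝ)^2 * (2 * Real.logb 2 n) := by
          apply mul_le_mul_of_nonneg_left hLlog (by positivity)
      _ = 64 * ((k:ℝ)^2 * Real.logb 2 n) := by ring
end
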